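/- arXiv:2304.08090 — 2 statements merged into one kernel-verified Lean document; each statement's English description precedes it below -/
import Mathlib

section
/- Let Ω ⊂ ℝ^d be a compact set, let f₁,…,f_N : Ω → ℝ be continuous, linearly independent functions, and let F = span(f₁,…,f_N). Assume F satisfies the Krein condition (there exists f ∈ F that does not vanish anywhere on Ω) and that L : F → ℝ is a positive linear functional, i.e. L(f) > 0 for every f ∈ F with f ≥ 0 on Ω and f not identically zero on Ω. If (P_i)_{i≥1} is a sequence that is dense in Ω, then there exists m such that the set X_m = {P₁,…,P_m} is a Tchakaloff set: there exist ν ≤ N, nodes Z₁,…,Z_ν ∈ X_m and weights w₁,…,w_ν > 0 such that L(f) = Σ_{k=1}^{ν} w_k f(Z_k) for every f ∈ F. -/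
/-!
Send a point `x` to its moment vector `(f₁ x, …, f_N x) ∈ ℝ^N`, and `L` to
`ℓ = (L f₁, …, L f_N)`. A nonzero functional `φ` on `ℝ^N` that is nonnegative on the moment
vectors of all `P i` yields `g = φ ∘ moments ∈ F`, nonnegative on the dense set `{P i}` and hence
on `Ω`, and nonzero by linear independence; so `φ ℓ = L g > 0`. Compactness of the unit sphere of
the dual shows that the moment vectors of finitely many points `P₀, …, P_{m₀}` already force this,
and Farkas' lemma, which applies because finitely generated cones are closed, then puts `ℓ` in
their conic hull. Conic Carathéodory finally reduces to linearly independent, hence at most `N`,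
nodes with positive weights.
-/

open Finset

section Caratheodory

variable {𝕜 E ι : Type*} [Field 𝕜] [LinearOrder 𝕜] [IsStrictOrderedRing 𝕜]
  [AddCommGroup E] [Module 𝕜 E] {v : ι → E}

theorem exists_erase_nonneg_sum_eq [DecidableEq ι] {s : Finset ι}
    (hv : ¬LinearIndepOn 𝕜 v s) {w : ι → 𝕜} (hw : ∀ i ∈ s, 0 ≤ w i) :
    ∃ j ∈ s, ∃ w' : ι → 𝕜, (∀ i ∈ s.erase j, 0 ≤ w' i) ∧
      ∑ i ∈ s.erase j, w' i • v i = ∑ i ∈ s, w i • v i := by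
  obtain ⟨g, hg, hpos⟩ : ∃ g : ι → 𝕜, ∑ i ∈ s, g i • v i = 0 ∧ ∃ i ∈ s, 0 < g i := by
    obtain ⟨g, hg, i, hi, hgi⟩ := not_linearIndepOn_finset_iff.mp hv
    rcases hgi.lt_or_gt with hneg | hpos
    · exact ⟨-g, by simp [neg_smul, hg], i, hi, by simpa using hneg⟩
    · exact ⟨g, hg, i, hi, hpos⟩
  -- Subtract the largest multiple `τ • g` of the relation that keeps all weights nonnegative.
  obtain ⟨j, hj, hmin⟩ := (s.filter (0 < g ·)).exists_min_image (fun i => w i / g i)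
    (by simpa [Finset.Nonempty] using hpos)
  rw [mem_filter] at hj
  set τ := w j / g j
  have hτ : 0 ≤ τ := div_nonneg (hw j hj.1) hj.2.le
  refine ⟨j, hj.1, fun i => w i - τ * g i, fun i hi => ?_, ?_⟩
  · have hi := mem_of_mem_erase hi
    rcases lt_or_ge 0 (g i) with hgi | hgi
    · rw [sub_nonneg, ← le_div_iff₀ hgi]
      exact hmin i (mem_filter.mpr ⟨hi, hgi⟩)
    · nlinarith [hw i hi]
  · rw [sum_erase _ (by simp [τ, hj.2.ne']), ← sub_eq_zero]
    simp only [sub_smul, sum_sub_distrib, mul_smul, ← smul_sum, hg, smul_zero]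
    abel

variable (v) in
theorem exists_linearIndepOn_pos_sum_eq (s : Finset ι) {w : ι → 𝕜} (hw : ∀ i ∈ s, 0 ≤ w i) :
    ∃ t ⊆ s, LinearIndepOn 𝕜 v t ∧ ∃ w' : ι → 𝕜, (∀ i ∈ t, 0 < w' i) ∧
      ∑ i ∈ t, w' i • v i = ∑ i ∈ s, w i • v i := by
  classical
  induction s using Finset.strongInduction generalizing w with
  | H s ih =>
    by_cases hv : LinearIndepOn 𝕜 v s
    · refine ⟨s.filter (0 < w ·), filter_subset _ _,
        hv.mono (coe_subset.mpr (filter_subset _ _)), w, fun i hi => (mem_filter.mp hi).2,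
        sum_filter_of_ne fun i hi hne => ?_⟩
      exact (hw i hi).lt_of_ne' fun h => hne (by simp [h])
    · obtain ⟨j, hj, w', hw', hsum⟩ := exists_erase_nonneg_sum_eq hv hw
      obtain ⟨t, hts, ht, w'', hw'', hsum'⟩ := ih _ (erase_ssubset hj) hw'
      exact ⟨t, hts.trans (erase_subset _ _), ht, w'', hw'', hsum'.trans hsum⟩

namespace PointedCone

theorem mem_hull_range_iff [Fintype ι] {x : E} :
    x ∈ hull 𝕜 (Set.range v) ↔ ∃ c : ι → 𝕜, 0 ≤ c ∧ ∑ i, c i • v i = x := by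
  rw [Submodule.mem_span_range_iff_exists_fun]
  constructor
  · rintro ⟨c, rfl⟩
    exact ⟨fun i => c i, fun i => (c i).2, rfl⟩
  · rintro ⟨c, hc, rfl⟩
    exact ⟨fun i => ⟨c i, hc i⟩, rfl⟩

theorem sum_mem_hull_image {t : Finset ι} {w : ι → 𝕜} (hw : ∀ i ∈ t, 0 ≤ w i) :
    ∑ i ∈ t, w i • v i ∈ hull 𝕜 (v '' t) :=
  Submodule.sum_mem _ fun i hi => smul_mem _ (hw i hi) (subset_hull ⟨i, hi, rfl⟩)

theorem exists_linearIndepOn_pos_sum_eq_of_mem_hull [Fintype ι] {x : E}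
    (hx : x ∈ hull 𝕜 (Set.range v)) :
    ∃ t : Finset ι, LinearIndepOn 𝕜 v t ∧
      ∃ w : ι → 𝕜, (∀ i ∈ t, 0 < w i) ∧ ∑ i ∈ t, w i • v i = x := by
  obtain ⟨c, hc, rfl⟩ := mem_hull_range_iff.mp hx
  obtain ⟨t, -, ht, w, hw, hsum⟩ := exists_linearIndepOn_pos_sum_eq v univ fun i _ => hc i
  exact ⟨t, ht, w, hw, hsum⟩

end PointedCone

end Caratheodory

namespace PointedCone

section Closed

variable {E ι : Type*} [AddCommGroup E] [Module ℝ E] [TopologicalSpace E]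
  [IsTopologicalAddGroup E] [ContinuousSMul ℝ E] [T2Space E] [Fintype ι]

theorem isClosed_hull_range_of_linearIndependent {v : ι → E} (hv : LinearIndependent ℝ v) :
    IsClosed (hull ℝ (Set.range v) : Set E) := by
  have himage : (hull ℝ (Set.range v) : Set E) =
      Fintype.linearCombination ℝ v '' Set.Ici 0 := by
    ext x
    simp [mem_hull_range_iff, Fintype.linearCombination_apply]
  rw [himage]
  exact (LinearMap.isClosedEmbedding_of_injective
    (LinearMap.ker_eq_bot.mpr hv.fintypeLinearCombination_injective)).isClosedMap _ isClosed_Ici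

theorem isClosed_hull_range (v : ι → E) :
    IsClosed (hull ℝ (Set.range v) : Set E) := by
  have hunion : (hull ℝ (Set.range v) : Set E) =
      ⋃ t : {t : Finset ι // LinearIndepOn ℝ v t}, hull ℝ (v '' t) := by
    refine subset_antisymm (fun x hx => ?_)
      (Set.iUnion_subset fun t => Submodule.span_mono (Set.image_subset_range _ _))
    obtain ⟨t, ht, w, hw, rfl⟩ := exists_linearIndepOn_pos_sum_eq_of_mem_hull hx
    exact Set.mem_iUnion.mpr ⟨⟨t, ht⟩, sum_mem_hull_image fun i hi => (hw i hi).le⟩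
  rw [hunion]
  exact isClosed_iUnion_of_finite fun t => by
    rw [Set.image_eq_range]
    exact isClosed_hull_range_of_linearIndependent t.2

end Closed

theorem exists_forall_ge_mem_hull_image_Iic {E : Type*} [NormedAddCommGroup E]
    [NormedSpace ℝ E] [FiniteDimensional ℝ E] (v : ℕ → E) (x : E)
    (hx : ∀ φ : StrongDual ℝ E, φ ≠ 0 → (∀ i, 0 ≤ φ (v i)) → 0 < φ x) :
    ∃ m₀, ∀ m ≥ m₀, x ∈ hull ℝ (v '' Set.Iic m) := by
  have hcont_apply (y : E) : Continuous fun φ : StrongDual ℝ E => φ y :=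
    continuous_id.clm_apply continuous_const
  set K : Set (StrongDual ℝ E) := Metric.sphere 0 1 ∩ {φ | φ x ≤ 0}
  set U : ℕ → Set (StrongDual ℝ E) := fun m => ⋃ i ∈ Set.Iic m, {φ | φ (v i) < 0}
  have hK : IsCompact K :=
    (isCompact_sphere 0 1).inter_right (isClosed_le (hcont_apply x) continuous_const)
  have hU (m : ℕ) : IsOpen (U m) :=
    isOpen_biUnion fun i _ => isOpen_lt (hcont_apply (v i)) continuous_const
  have hKU : K ⊆ ⋃ m, U m := by
    rintro φ ⟨hφ, hφx⟩
    by_contra! h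
    simp only [U, Set.mem_iUnion, Set.mem_ofPred_eq, not_exists, not_lt] at h
    exact (hx φ (ne_zero_of_mem_sphere one_ne_zero ⟨φ, hφ⟩) fun i => h i i Set.self_mem_Iic).not_ge
      hφx
  have hUmono : Monotone U := fun m m' h =>
    Set.biUnion_subset_biUnion_left (Set.Iic_subset_Iic.mpr h)
  obtain ⟨m₀, hm₀⟩ := hK.elim_directed_cover U hU hKU hUmono.directed_le
  refine ⟨m₀, fun m hm => ?_⟩
  by_contra hxm
  have hC : IsClosed (hull ℝ (v '' Set.Iic m) : Set E) := by
    rw [Set.image_eq_range]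
    exact isClosed_hull_range _
  let C : ProperCone ℝ E := ⟨_, hC⟩
  obtain ⟨φ, hφC, hφx⟩ := C.hyperplane_separation_point hxm
  have hφ : φ ≠ 0 := by rintro rfl; simp at hφx
  have hψK : ‖φ‖⁻¹ • φ ∈ K :=
    ⟨by simp [norm_smul, hφ],
      by simpa using mul_nonpos_of_nonneg_of_nonpos (by positivity) hφx.le⟩
  obtain ⟨i, hi, hψi⟩ := Set.mem_iUnion₂.mp (hm₀ hψK)
  have hφi := hφC (v i) (subset_hull ⟨i, Set.Iic_subset_Iic.mpr hm hi, rfl⟩)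
  have : 0 ≤ ‖φ‖⁻¹ * φ (v i) := mul_nonneg (by positivity) hφi
  exact this.not_gt hψi

end PointedCone

section Moments

variable {X κ : Type*}

theorem LinearMap.apply_eq_sum_mul_apply_single [Fintype κ] [DecidableEq κ]
    (φ : (κ → ℝ) →ₗ[ℝ] ℝ) (y : κ → ℝ) : φ y = ∑ j, y j * φ (Pi.single j 1) := by
  rw [φ.pi_apply_eq_sum_univ]
  refine sum_congr rfl fun j _ => ?_
  rw [smul_eq_mul]
  congr 2
  funext k
  simp [Pi.single_apply, eq_comm]

theorem pos_apply_moments_of_nonneg_on_dense [TopologicalSpace X] [Fintype κ]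
    {f : κ → X → ℝ} (hf_cont : ∀ j, Continuous (f j)) (hf_li : LinearIndependent ℝ f)
    {L : (X → ℝ) →ₗ[ℝ] ℝ}
    (hLpos : ∀ g ∈ Submodule.span ℝ (Set.range f), (∀ x, 0 ≤ g x) → (∃ x, g x ≠ 0) → 0 < L g)
    {S : Set X} (hS : Dense S) (φ : StrongDual ℝ (κ → ℝ)) (hφ : φ ≠ 0)
    (hφS : ∀ x ∈ S, 0 ≤ φ (fun j => f j x)) : 0 < φ (fun j => L (f j)) := by
  classical
  set c : κ → ℝ := fun j => φ (Pi.single j 1)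
  set g : X → ℝ := ∑ j, c j • f j
  have hφ_apply (y : κ → ℝ) : φ y = ∑ j, y j * c j :=
    φ.toLinearMap.apply_eq_sum_mul_apply_single y
  have hg (x : X) : g x = φ (fun j => f j x) := by
    simp [g, hφ_apply, mul_comm]
  have hg_mem : g ∈ Submodule.span ℝ (Set.range f) :=
    (Submodule.mem_span_range_iff_exists_fun ℝ).mpr ⟨c, rfl⟩
  have hg_nonneg (x : X) : 0 ≤ g x := by
    rw [hg]
    exact hS.induction hφS
      (isClosed_le continuous_const (φ.continuous.comp (continuous_pi hf_cont))) x
  have hg_ne : ∃ x, g x ≠ 0 := by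
    by_contra! h
    have hc : c = 0 := funext (Fintype.linearIndependent_iff.mp hf_li c (funext h))
    exact hφ (ContinuousLinearMap.coe_injective ((Pi.basisFun ℝ κ).ext fun j => by
      simpa [c] using congr_fun hc j))
  have hLg : L g = φ (fun j => L (f j)) := by
    simp [g, hφ_apply, mul_comm]
  exact hLg ▸ hLpos g hg_mem hg_nonneg hg_ne

theorem eq_sum_of_sum_smul_moments_eq {ι : Type*} {L : (X → ℝ) →ₗ[ℝ] ℝ} {f : κ → X → ℝ}
    {t : Finset ι} {Z : ι → X} {w : ι → ℝ}
    (h : ∑ i ∈ t, w i • (fun j => f j (Z i)) = fun j => L (f j)) :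
    ∀ g ∈ Submodule.span ℝ (Set.range f), L g = ∑ i ∈ t, w i * g (Z i) := by
  intro g hg
  refine (LinearMap.eqOn_span' (g := ∑ i ∈ t, w i • LinearMap.proj (Z i)) ?_ hg).trans ?_
  · rintro _ ⟨j, rfl⟩
    simpa [Finset.sum_apply] using (congr_fun h j).symm
  · simp

end Moments

theorem davis_wilhelmsen_general
    {d N : ℕ} (Ω : Set (EuclideanSpace ℝ (Fin d)))
    (f : Fin N → ↥Ω → ℝ) (hf_cont : ∀ j, Continuous (f j))
    (hf_li : LinearIndependent ℝ f)
    (L : (↥Ω → ℝ) →ₗ[ℝ] ℝ)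
    (hLpos : ∀ g ∈ Submodule.span ℝ (Set.range f),
      (∀ x, 0 ≤ g x) → (∃ x, g x ≠ 0) → 0 < L g)
    (P : ℕ → ↥Ω) (hP : Dense (Set.range P)) :
    ∃ m₀ : ℕ, ∀ m ≥ m₀, ∃ ν : ℕ, ν ≤ N ∧ ∃ (Z : Fin ν → ↥Ω) (w : Fin ν → ℝ),
      (∀ k, ∃ i ≤ m, Z k = P i) ∧ (∀ k, 0 < w k) ∧
      ∀ g ∈ Submodule.span ℝ (Set.range f), L g = ∑ k, w k * g (Z k) := by
  obtain ⟨m₀, hm₀⟩ := PointedCone.exists_forall_ge_mem_hull_image_Iic (fun i j => f j (P i))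
    (fun j => L (f j)) fun φ hφ hφP =>
      pos_apply_moments_of_nonneg_on_dense hf_cont hf_li hLpos hP φ hφ
        (Set.forall_mem_range.mpr hφP)
  refine ⟨m₀, fun m hm => ?_⟩
  have hmem := hm₀ m hm
  rw [Set.image_eq_range] at hmem
  obtain ⟨t, ht, w, hw, hsum⟩ := PointedCone.exists_linearIndepOn_pos_sum_eq_of_mem_hull hmem
  let e := t.equivFin.symm
  refine ⟨t.card, ?_, fun k => P (e k), fun k => w (e k), fun k => ⟨e k, (e k).1.2, rfl⟩,
    fun k => hw _ (e k).2, fun g hg => ?_⟩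
  · simpa using ht.fintype_card_le_finrank
  · rw [eq_sum_of_sum_smul_moments_eq hsum g hg, ← sum_coe_sort t, ← e.sum_comp]

/-- **Davis–Wilhelmsen theorem.** Let `Ω ⊂ ℝ^d` be compact, `f₁,…,f_N` continuous
linearly independent functions on `Ω`, `F = span(f₁,…,f_N)` satisfying the Krein
condition, and `L` a positive linear functional on `F`. If `(P_i)` is a dense
sequence in `Ω`, then for all sufficiently large `m` the set `X_m = {P₀,…,P_m}`
is a Tchakaloff set: there are `ν ≤ N` nodes `Z_k ∈ X_m` and positive weights
`w_k` with `L(f) = Σ w_k f(Z_k)` for all `f ∈ F`. -/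
theorem davis_wilhelmsen
    {d N : ℕ} (Ω : Set (EuclideanSpace ℝ (Fin d))) (hΩ : IsCompact Ω)
    (f : Fin N → ↥Ω → ℝ) (hf_cont : ∀ j, Continuous (f j))
    (hf_li : LinearIndependent ℝ f)
    (hKrein : ∃ g ∈ Submodule.span ℝ (Set.range f), ∀ x : ↥Ω, g x ≠ 0)
    (L : (↥Ω → ℝ) →ₗ[ℝ] ℝ)
    (hLpos : ∀ g ∈ Submodule.span ℝ (Set.range f),
      (∀ x, 0 ≤ g x) → (∃ x, g x ≠ 0) → 0 < L g)
    (P : ℕ → ↥Ω) (hP : Dense (Set.range P)) :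
    ∃ m₀ : ℕ, ∀ m ≥ m₀, ∃ ν : ℕ, ν ≤ N ∧ ∃ (Z : Fin ν → ↥Ω) (w : Fin ν → ℝ),
      (∀ k, ∃ i ≤ m, Z k = P i) ∧ (∀ k, 0 < w k) ∧
      ∀ g ∈ Submodule.span ℝ (Set.range f), L g = ∑ k, w k * g (Z k) :=
  davis_wilhelmsen_general Ω f hf_cont hf_li L hLpos P hP
end

section
/- Let J be a compact set, σ(J) > 0, and let I(f) = ∫_J f dσ be integration against a finite positive measure σ with total mass σ(J). Let X_M = {P₁,…,P_M} ⊂ J and L(f) = (σ(J)/M) Σ_{i=1}^{M} f(P_i) be the QMC functional. Let ℓ(f) = Σ_{k=1}^{ν} w_k f(Z_k) with w_k > 0 and Z_k ∈ X_M, and suppose ℓ(p) = L(p) for every p in a subspace P of continuous functions on J that contains the constant functions. Then for every continuous f on J, |ℓ(f) − I(f)| ≤ |L(f) − I(f)| + 2 σ(J) E(f; X_M) ≤ |L(f) − I(f)| + 2 σ(J) E(f; J), where E(f; K) = inf_{p ∈ P} max_{x ∈ K} |f(x) − p(x)|. -/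
open MeasureTheory

/-! The compressed rule `ℓ` and the QMC rule `L` are positive rules of the same total mass
`σ(J)` (apply the exactness to the constant `1`; the mass is `0` when `M = 0`) that agree on
every `p ∈ P`. Hence `ℓ(f) - L(f) = ℓ(f - p) - L(f - p)`, and each term is at most `σ(J)`
times the maximum of `|f - p|` on the nodes, all of which lie in `X_M`. Minimising over `p`
and using the triangle inequality through `L(f)` gives the first estimate; the second holds
because `X_M ⊆ J`. -/

section QuadratureRule

variable {X ι κ : Type*} [Fintype ι] [Fintype κ]

theorem abs_sum_mul_le_sum_mul {w g : ι → ℝ} {ε : ℝ} (hw : ∀ i, 0 ≤ w i)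
    (hg : ∀ i, |g i| ≤ ε) : |∑ i, w i * g i| ≤ (∑ i, w i) * ε :=
  calc |∑ i, w i * g i| ≤ ∑ i, |w i * g i| := Finset.abs_sum_le_sum_abs _ _
    _ ≤ ∑ i, w i * ε := Finset.sum_le_sum fun i _ => by
        rw [abs_mul, abs_of_nonneg (hw i)]
        exact mul_le_mul_of_nonneg_left (hg i) (hw i)
    _ = (∑ i, w i) * ε := (Finset.sum_mul ..).symm

theorem abs_rule_sub_rule_le {w : ι → ℝ} {Z : ι → X} {v : κ → ℝ} {Y : κ → X}
    (hw : ∀ i, 0 ≤ w i) (hv : ∀ k, 0 ≤ v k) {f p : X → ℝ}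
    (hp : ∑ i, w i * p (Z i) = ∑ k, v k * p (Y k)) {ε : ℝ}
    (hfZ : ∀ i, |f (Z i) - p (Z i)| ≤ ε) (hfY : ∀ k, |f (Y k) - p (Y k)| ≤ ε) :
    |∑ i, w i * f (Z i) - ∑ k, v k * f (Y k)| ≤ (∑ i, w i + ∑ k, v k) * ε := by
  have hsplit : ∑ i, w i * f (Z i) - ∑ k, v k * f (Y k) =
      ∑ i, w i * (f (Z i) - p (Z i)) - ∑ k, v k * (f (Y k) - p (Y k)) := by
    simp only [mul_sub, Finset.sum_sub_distrib, hp]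
    ring
  rw [hsplit, add_mul]
  exact (abs_sub _ _).trans
    (add_le_add (abs_sum_mul_le_sum_mul hw hfZ) (abs_sum_mul_le_sum_mul hv hfY))

end QuadratureRule

theorem iInf_iSup_comp_le_iInf_iSup {X ι κ : Type*} (P : ι → X) {h : κ → X → ℝ}
    (h_nonneg : ∀ k x, 0 ≤ h k x) (h_bdd : ∀ k, BddAbove (Set.range (h k))) :
    ⨅ k, ⨆ i, h k (P i) ≤ ⨅ k, ⨆ x, h k x :=
  ciInf_mono ⟨0, by rintro _ ⟨k, rfl⟩; exact Real.iSup_nonneg fun i => h_nonneg k (P i)⟩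
    fun k => Real.iSup_le (fun i => le_ciSup (h_bdd k) (P i))
      (Real.iSup_nonneg (h_nonneg k))

theorem natCast_mul_div_le {c : ℝ} (hc : 0 ≤ c) (M : ℕ) : (M : ℝ) * (c / M) ≤ c := by
  rcases eq_or_ne (M : ℝ) 0 with hM | hM
  · simpa [hM] using hc
  · rw [mul_div_cancel₀ c hM]

theorem compressed_qmc_error_estimate_general
    {J : Type*} [TopologicalSpace J] [CompactSpace J] [MeasurableSpace J]
    (σ : Measure J)
    {M : ℕ} (P : Fin M → J)
    (Psub : Submodule ℝ C(J, ℝ)) (hconst : (1 : C(J, ℝ)) ∈ Psub)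
    {ν : ℕ} (w : Fin ν → ℝ) (hw : ∀ k, 0 < w k) (Z : Fin ν → J)
    (hZ : ∀ k, Z k ∈ Set.range P)
    (hexact : ∀ p ∈ Psub,
      ∑ k, w k * p (Z k) = ((σ Set.univ).toReal / M) * ∑ i, p (P i))
    (f : C(J, ℝ)) :
    |(∑ k, w k * f (Z k)) - ∫ x, f x ∂σ| ≤
        |((σ Set.univ).toReal / M) * (∑ i, f (P i)) - ∫ x, f x ∂σ|
          + 2 * (σ Set.univ).toReal *
              (⨅ p : Psub, ⨆ i, |f (P i) - (p : C(J, ℝ)) (P i)|) ∧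
      |((σ Set.univ).toReal / M) * (∑ i, f (P i)) - ∫ x, f x ∂σ|
          + 2 * (σ Set.univ).toReal *
              (⨅ p : Psub, ⨆ i, |f (P i) - (p : C(J, ℝ)) (P i)|) ≤
        |((σ Set.univ).toReal / M) * (∑ i, f (P i)) - ∫ x, f x ∂σ|
          + 2 * (σ Set.univ).toReal *
              (⨅ p : Psub, ⨆ x, |f x - (p : C(J, ℝ)) x|) := by
  set c := (σ Set.univ).toReal
  simp only [Finset.mul_sum] at hexact ⊢
  have hmass : ∑ k, w k + ∑ _i : Fin M, c / M ≤ 2 * c := by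
    have hℓ : ∑ k, w k = ∑ _i : Fin M, c / M := by simpa using hexact 1 hconst
    rw [hℓ, ← two_mul, Finset.sum_const, Finset.card_univ, Fintype.card_fin, nsmul_eq_mul]
    exact mul_le_mul_of_nonneg_left (natCast_mul_div_le ENNReal.toReal_nonneg M) two_pos.le
  have hrules : |∑ k, w k * f (Z k) - ∑ i, c / M * f (P i)| ≤
      2 * c * ⨅ p : Psub, ⨆ i, |f (P i) - (p : C(J, ℝ)) (P i)| := by
    rw [Real.mul_iInf_of_nonneg (by positivity)]
    refine le_ciInf fun p => ?_
    set E := ⨆ i, |f (P i) - (p : C(J, ℝ)) (P i)|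
    have hnode : ∀ i, |f (P i) - (p : C(J, ℝ)) (P i)| ≤ E :=
      le_ciSup (Set.finite_range _).bddAbove
    calc _ ≤ (∑ k, w k + ∑ _i : Fin M, c / M) * E :=
          abs_rule_sub_rule_le (fun k => (hw k).le) (fun _ => by positivity) (hexact p p.2)
            (fun k => (hZ k).elim fun i hi => hi ▸ hnode i) hnode
      _ ≤ 2 * c * E := mul_le_mul_of_nonneg_right hmass (Real.iSup_nonneg fun _ => abs_nonneg _)
  have hL := abs_sub_le (∑ k, w k * f (Z k)) (∑ i, c / M * f (P i)) (∫ x, f x ∂σ)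
  have hJ := iInf_iSup_comp_le_iInf_iSup P (h := fun (p : Psub) x => |f x - (p : C(J, ℝ)) x|)
    (fun _ _ => abs_nonneg _) fun p => (isCompact_range (by fun_prop)).bddAbove
  exact ⟨by linarith, by gcongr⟩

/-- **Error estimate for compressed QMC.** Let `J` be compact, `σ` a finite
positive measure on `J`, `L(f) = (σ(J)/M) Σᵢ f(Pᵢ)` the QMC functional on the
points `X_M = {P₁,…,P_M} ⊆ J`, and `ℓ(f) = Σₖ wₖ f(Zₖ)` a rule with positive
weights, nodes `Zₖ ∈ X_M`, matching `L` on a subspace `P ⊆ C(J)` containing the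
constants. Then for every continuous `f`,
`|ℓ(f) − ∫f dσ| ≤ |L(f) − ∫f dσ| + 2 σ(J) E(f;X_M)` and
`|L(f) − ∫f dσ| + 2 σ(J) E(f;X_M) ≤ |L(f) − ∫f dσ| + 2 σ(J) E(f;J)`,
where `E(f;K) = inf_{p ∈ P} sup_{x ∈ K} |f(x) − p(x)|`. -/
theorem compressed_qmc_error_estimate
    {J : Type*} [TopologicalSpace J] [CompactSpace J] [MeasurableSpace J]
    (σ : Measure J) [IsFiniteMeasure σ] (hσ : 0 < (σ Set.univ).toReal)
    {M : ℕ} (hM : 0 < M) (P : Fin M → J)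
    (Psub : Submodule ℝ C(J, ℝ)) (hconst : (1 : C(J, ℝ)) ∈ Psub)
    {ν : ℕ} (w : Fin ν → ℝ) (hw : ∀ k, 0 < w k) (Z : Fin ν → J)
    (hZ : ∀ k, Z k ∈ Set.range P)
    (hexact : ∀ p ∈ Psub,
      ∑ k, w k * p (Z k) = ((σ Set.univ).toReal / M) * ∑ i, p (P i))
    (f : C(J, ℝ)) :
    |(∑ k, w k * f (Z k)) - ∫ x, f x ∂σ| ≤
        |((σ Set.univ).toReal / M) * (∑ i, f (P i)) - ∫ x, f x ∂σ|
          + 2 * (σ Set.univ).toReal *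
              (⨅ p : Psub, ⨆ i, |f (P i) - (p : C(J, ℝ)) (P i)|) ∧
      |((σ Set.univ).toReal / M) * (∑ i, f (P i)) - ∫ x, f x ∂σ|
          + 2 * (σ Set.univ).toReal *
              (⨅ p : Psub, ⨆ i, |f (P i) - (p : C(J, ℝ)) (P i)|) ≤
        |((σ Set.univ).toReal / M) * (∑ i, f (P i)) - ∫ x, f x ∂σ|
          + 2 * (σ Set.univ).toReal *
              (⨅ p : Psub, ⨆ x, |f x - (p : C(J, ℝ)) x|) :=
  compressed_qmc_error_estimate_general σ P Psub hconst w hw Z hZ hexact f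
end
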